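/- arXiv:1603.00109 — 3 statements merged into one kernel-verified Lean document; each statement's English description precedes it below -/
import Mathlib

section
/- In the algebra R = K⟨x,y⟩/(xy−1) over a field K, the set {y^i x^j : i,j ≥ 0} forms a K-basis of R. -/
noncomputable section

/-- The defining relation of the Toeplitz/Jacobson algebra: `x * y = 1`. -/
inductive ToeplitzRel (K : Type*) [Field K] :
    FreeAlgebra K (Fin 2) → FreeAlgebra K (Fin 2) → Prop
  | rel : ToeplitzRel K (FreeAlgebra.ι K 0 * FreeAlgebra.ι K 1) 1

/-- The Toeplitz/Jacobson algebra `R = K⟨x,y⟩/(xy-1)`. -/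
abbrev Toeplitz (K : Type*) [Field K] := RingQuot (ToeplitzRel K)

variable (K : Type*) [Field K]

/-- The image of the generator `x` in `R`. -/
def tx : Toeplitz K := RingQuot.mkAlgHom K (ToeplitzRel K) (FreeAlgebra.ι K 0)

/-- The image of the generator `y` in `R`. -/
def ty : Toeplitz K := RingQuot.mkAlgHom K (ToeplitzRel K) (FreeAlgebra.ι K 1)

/-- `f n = y^(n-1) x^(n-1) - y^n x^n`. -/
def tf (n : ℕ) : Toeplitz K := ty K ^ (n-1) * tx K ^ (n-1) - ty K ^ n * tx K ^ n

/-!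
Since `x * y = 1`, moving an `x` past a `y` cancels the pair, so every word in `x, y` reduces to
a monomial `y^i x^j`, and these monomials multiply exactly like the elements of the bicyclic
monoid `B = ⟨q, p | p q = 1⟩`. The universal properties of `R` and of the monoid algebra `K[B]`
give mutually inverse algebra maps `R ≃ K[B]` sending `y^i x^j` to `q^i p^j`, and the canonical
basis of `K[B]` transports to the claimed basis of `R`.
-/

section PowMulPow

variable {M : Type*} [Monoid M] {a b : M}

theorem pow_succ_mul_pow_succ_of_mul_eq_one (h : a * b = 1) (j k : ℕ) :
    a ^ (j + 1) * b ^ (k + 1) = a ^ j * b ^ k := by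
  rw [pow_succ, pow_succ', mul_assoc, ← mul_assoc a, h, one_mul]

theorem pow_mul_pow_of_mul_eq_one (h : a * b = 1) (j k : ℕ) :
    a ^ j * b ^ k = b ^ (k - j) * a ^ (j - k) := by
  induction j generalizing k with
  | zero => simp
  | succ j ih =>
    cases k with
    | zero => simp
    | succ k => simp only [pow_succ_mul_pow_succ_of_mul_eq_one h, ih, Nat.add_sub_add_right]

theorem pow_mul_pow_mul_pow_mul_pow_of_mul_eq_one (h : a * b = 1) (i j k l : ℕ) :
    (b ^ i * a ^ j) * (b ^ k * a ^ l) = b ^ (i + (k - j)) * a ^ (l + (j - k)) := by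
  calc (b ^ i * a ^ j) * (b ^ k * a ^ l) = b ^ i * (a ^ j * b ^ k) * a ^ l := by
        simp only [mul_assoc]
    _ = b ^ i * (b ^ (k - j) * a ^ (j - k)) * a ^ l := by
        rw [pow_mul_pow_of_mul_eq_one h]
    _ = b ^ (i + (k - j)) * a ^ (l + (j - k)) := by
        simp only [pow_add, mul_assoc, (Commute.pow_pow_self a l (j - k)).eq]

end PowMulPow

/-- The bicyclic monoid `⟨q, p | p q = 1⟩`; `⟨i, j⟩` stands for `q ^ i * p ^ j`. -/
structure Bicyclic where
  qExp : ℕ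
  pExp : ℕ

namespace Bicyclic

instance : Mul Bicyclic :=
  ⟨fun a b => ⟨a.qExp + (b.qExp - a.pExp), b.pExp + (a.pExp - b.qExp)⟩⟩

instance : One Bicyclic := ⟨⟨0, 0⟩⟩

theorem mul_def (a b : Bicyclic) :
    a * b = ⟨a.qExp + (b.qExp - a.pExp), b.pExp + (a.pExp - b.qExp)⟩ := rfl

theorem one_def : (1 : Bicyclic) = ⟨0, 0⟩ := rfl

instance : Monoid Bicyclic where
  mul_assoc a b c := by
    simp only [mul_def, mk.injEq]
    omega
  one_mul a := by simp [mul_def, one_def]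
  mul_one a := by simp [mul_def, one_def]

def p : Bicyclic := ⟨0, 1⟩

def q : Bicyclic := ⟨1, 0⟩

theorem p_mul_q : p * q = 1 := rfl

theorem q_pow (n : ℕ) : q ^ n = ⟨n, 0⟩ := by
  induction n with
  | zero => rfl
  | succ n ih => rw [pow_succ, ih, mul_def]; simp [q]

theorem p_pow (n : ℕ) : p ^ n = ⟨0, n⟩ := by
  induction n with
  | zero => rfl
  | succ n ih => rw [pow_succ, ih, mul_def]; simp [p, Nat.add_comm]

theorem q_pow_mul_p_pow (a : Bicyclic) : q ^ a.qExp * p ^ a.pExp = a := by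
  simp [q_pow, p_pow, mul_def]

def lift {M : Type*} [Monoid M] (a b : M) (h : a * b = 1) : Bicyclic →* M where
  toFun c := b ^ c.qExp * a ^ c.pExp
  map_one' := by simp [one_def]
  map_mul' c d := (pow_mul_pow_mul_pow_mul_pow_of_mul_eq_one h _ _ _ _).symm

theorem lift_apply {M : Type*} [Monoid M] (a b : M) (h : a * b = 1) (c : Bicyclic) :
    lift a b h c = b ^ c.qExp * a ^ c.pExp := rfl

def equivProd : Bicyclic ≃ ℕ × ℕ where
  toFun a := (a.qExp, a.pExp)
  invFun n := ⟨n.1, n.2⟩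

end Bicyclic

namespace Toeplitz

open MonoidAlgebra

theorem tx_mul_ty : tx K * ty K = 1 := by
  simpa only [tx, ty, map_mul, map_one] using RingQuot.mkAlgHom_rel K (ToeplitzRel.rel (K := K))

def toMonoidAlgebra : Toeplitz K →ₐ[K] MonoidAlgebra K Bicyclic :=
  RingQuot.liftAlgHom K ⟨FreeAlgebra.lift K ![of K _ Bicyclic.p, of K _ Bicyclic.q], by
    rintro _ _ ⟨⟩
    simp only [map_mul, map_one, FreeAlgebra.lift_ι_apply, Matrix.cons_val_zero,
      Matrix.cons_val_one]
    rw [← map_mul, Bicyclic.p_mul_q, map_one]⟩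

theorem toMonoidAlgebra_tx : toMonoidAlgebra K (tx K) = of K _ Bicyclic.p := by
  simp [toMonoidAlgebra, tx, RingQuot.liftAlgHom_mkAlgHom_apply]

theorem toMonoidAlgebra_ty : toMonoidAlgebra K (ty K) = of K _ Bicyclic.q := by
  simp [toMonoidAlgebra, ty, RingQuot.liftAlgHom_mkAlgHom_apply]

def ofMonoidAlgebra : MonoidAlgebra K Bicyclic →ₐ[K] Toeplitz K :=
  MonoidAlgebra.lift K (Toeplitz K) Bicyclic (Bicyclic.lift (tx K) (ty K) (tx_mul_ty K))

theorem ofMonoidAlgebra_single_one (a : Bicyclic) :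
    ofMonoidAlgebra K (single a 1) = ty K ^ a.qExp * tx K ^ a.pExp := by
  simp [ofMonoidAlgebra, Bicyclic.lift_apply]

def equivMonoidAlgebra : MonoidAlgebra K Bicyclic ≃ₐ[K] Toeplitz K :=
  AlgEquiv.ofAlgHom (ofMonoidAlgebra K) (toMonoidAlgebra K)
    (by
      ext i
      fin_cases i
      · change ofMonoidAlgebra K (toMonoidAlgebra K (tx K)) = tx K
        rw [toMonoidAlgebra_tx, of_apply, ofMonoidAlgebra_single_one]
        simp [Bicyclic.p]
      · change ofMonoidAlgebra K (toMonoidAlgebra K (ty K)) = ty K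
        rw [toMonoidAlgebra_ty, of_apply, ofMonoidAlgebra_single_one]
        simp [Bicyclic.q])
    (by
      refine algHom_ext (fun a => ?_) (Subsingleton.elim _ _)
      simp only [AlgHom.coe_comp, Function.comp_apply, AlgHom.coe_id, id_eq,
        ofMonoidAlgebra_single_one, map_mul, map_pow, toMonoidAlgebra_tx, toMonoidAlgebra_ty]
      rw [← map_pow, ← map_pow, ← map_mul, Bicyclic.q_pow_mul_p_pow, of_apply])

end Toeplitz

/-- The set `{y^i x^j : i, j ≥ 0}` is a `K`-basis of `R = K⟨x,y⟩/(xy-1)`. -/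
theorem toeplitz_basis :
    ∃ b : Module.Basis (ℕ × ℕ) K (Toeplitz K), ∀ p : ℕ × ℕ, b p = ty K ^ p.1 * tx K ^ p.2 := by
  refine ⟨((MonoidAlgebra.basis Bicyclic K).map
    (Toeplitz.equivMonoidAlgebra K).toLinearEquiv).reindex Bicyclic.equivProd, fun n => ?_⟩
  simp only [Module.Basis.reindex_apply, Module.Basis.map_apply, MonoidAlgebra.basis_apply]
  exact Toeplitz.ofMonoidAlgebra_single_one K _
end
end

section
/- In R = K⟨x,y⟩/(xy−1), for each k ≥ 1 one has the internal direct sum decomposition of left R-modules R = Rf_1 ⊕ Rf_2 ⊕ ⋯ ⊕ Rf_k ⊕ Rx^k, where f_n = y^{n−1}x^{n−1} − y^n x^n. -/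
noncomputable section

variable (K : Type*) [Field K]

/-- `e n = y^n x^n`, an idempotent. -/
def te (n : ℕ) : Toeplitz K := ty K ^ n * tx K ^ n

lemma txy : tx K * ty K = 1 := by
  have h := RingQuot.mkAlgHom_rel K (ToeplitzRel.rel (K := K))
  simpa [tx, ty, map_mul] using h

lemma txyn (n : ℕ) : tx K ^ n * ty K ^ n = 1 := by
  induction n with
  | zero => simp
  | succ n ih =>
    rw [pow_succ, pow_succ', mul_assoc (tx K ^ n), ← mul_assoc (tx K), txy, one_mul, ih]

lemma tx_mul_ty_of_le {n m : ℕ} (h : n ≤ m) :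
    tx K ^ n * ty K ^ m = ty K ^ (m - n) := by
  have : ty K ^ m = ty K ^ n * ty K ^ (m - n) := by
    rw [← pow_add, Nat.add_sub_cancel' h]
  rw [this, ← mul_assoc, txyn, one_mul]

lemma tx_mul_ty_of_ge {n m : ℕ} (h : m ≤ n) :
    tx K ^ n * ty K ^ m = tx K ^ (n - m) := by
  have : tx K ^ n = tx K ^ (n - m) * tx K ^ m := by
    rw [← pow_add, Nat.sub_add_cancel h]
  rw [this, mul_assoc, txyn, mul_one]

lemma te_mul_te (n m : ℕ) : te K n * te K m = te K (max n m) := by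
  unfold te
  rcases le_total n m with h | h
  · rw [max_eq_right h, mul_assoc, ← mul_assoc (tx K ^ n), tx_mul_ty_of_le K h,
      ← mul_assoc, ← pow_add, Nat.add_sub_cancel' h]
  · rw [max_eq_left h, mul_assoc, ← mul_assoc (tx K ^ n), tx_mul_ty_of_ge K h,
      ← pow_add, Nat.sub_add_cancel h]

lemma te_zero : te K 0 = 1 := by simp [te]

/-- `d n = e n - e (n+1) = f (n+1)`. -/
def td (n : ℕ) : Toeplitz K := te K n - te K (n + 1)

lemma tf_succ (n : ℕ) : tf K (n + 1) = td K n := by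
  simp [tf, td, te]

lemma td_mul_td_self (n : ℕ) : td K n * td K n = td K n := by
  simp only [td, sub_mul, mul_sub, te_mul_te]
  rw [Nat.max_self, Nat.max_eq_right (by omega : n ≤ n + 1),
    Nat.max_eq_left (by omega : n ≤ n + 1), Nat.max_self]
  abel

lemma td_mul_td (n m : ℕ) (h : n ≠ m) : td K n * td K m = 0 := by
  simp only [td, sub_mul, mul_sub, te_mul_te]
  rcases lt_or_gt_of_ne h with h | h
  · rw [Nat.max_eq_right (by omega : n ≤ m), Nat.max_eq_right (by omega : n ≤ m + 1),
      Nat.max_eq_right (by omega : n + 1 ≤ m), Nat.max_eq_right (by omega : n + 1 ≤ m + 1)]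
    abel
  · rw [Nat.max_eq_left (by omega : m ≤ n), Nat.max_eq_left (by omega : m + 1 ≤ n),
      Nat.max_eq_left (by omega : m ≤ n + 1), Nat.max_eq_left (by omega : m + 1 ≤ n + 1)]
    abel

lemma td_mul_te (n m : ℕ) (h : n < m) : td K n * te K m = 0 := by
  simp only [td, sub_mul, te_mul_te]
  rw [Nat.max_eq_right (by omega : n ≤ m), Nat.max_eq_right (by omega : n + 1 ≤ m)]
  abel

lemma te_mul_td (n m : ℕ) (h : m < n) : te K n * td K m = 0 := by
  simp only [td, mul_sub, te_mul_te]
  rw [Nat.max_eq_left (by omega : m ≤ n), Nat.max_eq_left (by omega : m + 1 ≤ n)]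
  abel

lemma te_mul_te_self (n : ℕ) : te K n * te K n = te K n := by
  rw [te_mul_te, Nat.max_self]

lemma span_tx_pow (k : ℕ) :
    Submodule.span (Toeplitz K) {tx K ^ k} = Submodule.span (Toeplitz K) {te K k} := by
  apply le_antisymm <;> rw [Submodule.span_le, Set.singleton_subset_iff] <;>
    rw [SetLike.mem_coe, Submodule.mem_span_singleton]
  · refine ⟨tx K ^ k, ?_⟩
    simp only [smul_eq_mul, te, ← mul_assoc, txyn, one_mul]
  · exact ⟨ty K ^ k, by simp [te, smul_eq_mul]⟩

/-- For each `k ≥ 1`, `R = Rf_1 ⊕ ⋯ ⊕ Rf_k ⊕ Rx^k` as an internal direct sum of left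
`R`-submodules of `R`. -/
theorem toeplitz_decomposition (k : ℕ) (hk : 1 ≤ k) :
    DirectSum.IsInternal (fun i : Fin (k + 1) =>
      if (i : ℕ) < k then Submodule.span (Toeplitz K) {tf K ((i : ℕ) + 1)}
      else Submodule.span (Toeplitz K) {tx K ^ k}) := by
  set g : Fin (k + 1) → Toeplitz K :=
    fun i => if (i : ℕ) < k then td K (i : ℕ) else te K k with hgdef
  set A : Fin (k + 1) → Submodule (Toeplitz K) (Toeplitz K) :=
    fun i => if (i : ℕ) < k then Submodule.span (Toeplitz K) {tf K ((i : ℕ) + 1)}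
      else Submodule.span (Toeplitz K) {tx K ^ k} with hAdef
  have hA : ∀ i, A i = Submodule.span (Toeplitz K) {g i} := by
    intro i
    by_cases h : (i : ℕ) < k <;> simp only [hAdef, hgdef, h, if_true, if_false, if_pos, if_neg]
    · rw [tf_succ]
    · exact span_tx_pow K k
  -- orthogonality and idempotence of g
  have horth : ∀ i j, i ≠ j → g i * g j = 0 := by
    intro i j hij
    have hij' : (i : ℕ) ≠ (j : ℕ) := fun h => hij (Fin.ext h)
    by_cases hi : (i : ℕ) < k <;> by_cases hj : (j : ℕ) < k <;>
      simp only [hgdef, hi, hj, if_true, if_false, if_pos, if_neg]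
    · exact td_mul_td K _ _ hij'
    · exact td_mul_te K _ _ hi
    · exact te_mul_td K _ _ hj
    · omega
  have hidem : ∀ i, g i * g i = g i := by
    intro i
    by_cases hi : (i : ℕ) < k <;> simp only [hgdef, hi, if_true, if_false, if_pos, if_neg]
    · exact td_mul_td_self K _
    · exact te_mul_te_self K _
  -- the sum of the g's is 1
  have hsum : ∑ i, g i = 1 := by
    rw [Fin.sum_univ_castSucc]
    have hlast : g (Fin.last k) = te K k := by
      simp [hgdef, Fin.val_last]
    have hcast : ∀ i : Fin k, g i.castSucc = td K (i : ℕ) := by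
      intro i
      simp [hgdef, Fin.coe_castSucc, i.isLt]
    rw [hlast]
    calc (∑ i : Fin k, g i.castSucc) + te K k
        = (∑ i : Fin k, td K (i : ℕ)) + te K k := by
          rw [Finset.sum_congr rfl fun i _ => hcast i]
      _ = (∑ i ∈ Finset.range k, td K i) + te K k := by
          rw [Fin.sum_univ_eq_sum_range]
      _ = (te K 0 - te K k) + te K k := by
          simp only [td]
          rw [Finset.sum_range_sub' (fun i => te K i)]
      _ = 1 := by rw [te_zero]; abel
  apply DirectSum.isInternal_submodule_of_iSupIndep_of_iSup_eq_top
  · -- independence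
    rw [iSupIndep_def]
    intro i
    rw [Submodule.disjoint_def]
    intro z hzi hzrest
    -- z ∈ A i means z * g i = z
    have hz1 : z * g i = z := by
      rw [hA i] at hzi
      obtain ⟨r, hr⟩ := Submodule.mem_span_singleton.mp hzi
      rw [← hr, smul_eq_mul, mul_assoc, hidem]
    -- everything in the other submodules is killed by right mult by g i
    have hker : (⨆ (j) (_ : j ≠ i), A j) ≤
        LinearMap.ker ((LinearMap.toSpanSingleton (Toeplitz K) (Toeplitz K) (g i)).comp
          (LinearMap.id)) := by
      refine iSup_le fun j => iSup_le fun hji => ?_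
      rw [hA j, Submodule.span_le, Set.singleton_subset_iff]
      simp only [SetLike.mem_coe, LinearMap.mem_ker, LinearMap.comp_apply, LinearMap.id_apply,
        LinearMap.toSpanSingleton_apply, smul_eq_mul]
      exact horth j i hji
    have hz0 : z * g i = 0 := by
      have := hker hzrest
      simpa [LinearMap.toSpanSingleton_apply, smul_eq_mul] using this
    rw [← hz1, hz0]
  · -- the supremum is everything
    rw [Submodule.eq_top_iff']
    intro r
    have h1 : (1 : Toeplitz K) ∈ ⨆ i, A i := by
      rw [← hsum]
      exact Submodule.sum_mem _ fun i _ =>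
        Submodule.mem_iSup_of_mem i ((hA i) ▸ Submodule.mem_span_singleton_self _)
    simpa using Submodule.smul_mem _ r h1
end
end

section
/- For each k ≥ 1, the left R-module R/Rx^k is isomorphic to a direct sum of k copies of the simple module S₁ = R(1−yx), where R = K⟨x,y⟩/(xy−1). -/
set_option maxHeartbeats 1000000


noncomputable section

variable (K : Type*) [Field K]

abbrev Tg : Toeplitz K := 1 - ty K * tx K

lemma txg : tx K * Tg K = 0 := by
  rw [mul_sub, mul_one, ← mul_assoc, txy, one_mul, sub_self]

lemma tgy : Tg K * ty K = 0 := by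
  rw [sub_mul, one_mul, mul_assoc, txy, mul_one, sub_self]

lemma tgg : Tg K * Tg K = Tg K := by
  have h : Tg K * (ty K * tx K) = 0 := by rw [← mul_assoc, tgy, zero_mul]
  rw [mul_sub, mul_one, h, sub_zero]

lemma txpow_g (m : ℕ) (hm : 0 < m) : tx K ^ m * Tg K = 0 := by
  obtain ⟨m, rfl⟩ := Nat.exists_eq_add_of_lt hm
  rw [zero_add, pow_succ (tx K), mul_assoc, txg, mul_zero]

lemma tg_ypow (m : ℕ) (hm : 0 < m) : Tg K * ty K ^ m = 0 := by
  obtain ⟨m, rfl⟩ := Nat.exists_eq_add_of_lt hm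
  rw [zero_add, pow_succ' (ty K), ← mul_assoc, tgy, zero_mul]

lemma txy_ge (i j : ℕ) (h : j ≤ i) : tx K ^ i * ty K ^ j = tx K ^ (i - j) := by
  conv_lhs => rw [show i = (i - j) + j from (Nat.sub_add_cancel h).symm, pow_add,
    mul_assoc, txyn, mul_one]

lemma txy_le (i j : ℕ) (h : i ≤ j) : tx K ^ i * ty K ^ j = ty K ^ (j - i) := by
  conv_lhs => rw [show j = i + (j - i) from (Nat.add_sub_cancel' h).symm, pow_add,
    ← mul_assoc, txyn, one_mul]

lemma key (j j' : ℕ) :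
    Tg K * (tx K ^ j * (ty K ^ j' * Tg K)) = if j = j' then Tg K else 0 := by
  rcases lt_trichotomy j j' with h | h | h
  · rw [if_neg h.ne, ← mul_assoc (tx K ^ j), txy_le K j j' h.le, ← mul_assoc,
      tg_ypow K _ (Nat.sub_pos_of_lt h), zero_mul]
  · subst h
    rw [if_pos rfl, ← mul_assoc (tx K ^ j), txyn, one_mul, tgg]
  · rw [if_neg h.ne', ← mul_assoc (tx K ^ j), txy_ge K j j' h.le,
      txpow_g K _ (Nat.sub_pos_of_lt h), mul_zero]

lemma xk_yj_g (k j : ℕ) (h : j < k) : tx K ^ k * (ty K ^ j * Tg K) = 0 := by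
  rw [← mul_assoc, txy_ge K k j h.le, txpow_g K _ (Nat.sub_pos_of_lt h)]

lemma tele (k : ℕ) :
    ∑ j ∈ Finset.range k, ty K ^ j * Tg K * tx K ^ j = 1 - ty K ^ k * tx K ^ k := by
  induction k with
  | zero => simp
  | succ k ih =>
    rw [Finset.sum_range_succ, ih]
    have : ty K ^ k * Tg K * tx K ^ k
        = ty K ^ k * tx K ^ k - ty K ^ (k + 1) * tx K ^ (k + 1) := by
      rw [mul_sub, mul_one, sub_mul, pow_succ (ty K), pow_succ' (tx K)]
      rw [mul_assoc (ty K ^ k), mul_assoc (ty K ^ k), mul_assoc (ty K)]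
    rw [this]
    abel

def phiAux (k : ℕ) :
    Toeplitz K →ₗ[Toeplitz K] (Fin k → (Submodule.span (Toeplitz K) {Tg K})) :=
  LinearMap.pi fun j =>
    LinearMap.codRestrict _
      (LinearMap.toSpanSingleton _ _ (ty K ^ (j : ℕ) * Tg K))
      (fun r => Submodule.mem_span_singleton.mpr
        ⟨r * ty K ^ (j : ℕ), by simp [LinearMap.toSpanSingleton_apply, smul_eq_mul, mul_assoc]⟩)

@[simp] lemma phiAux_apply (k : ℕ) (r : Toeplitz K) (j : Fin k) :
    ((phiAux K k r j : Toeplitz K)) = r * (ty K ^ (j : ℕ) * Tg K) := rfl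

def psi (k : ℕ) :
    (Fin k → (Submodule.span (Toeplitz K) {Tg K})) →ₗ[Toeplitz K]
      (Toeplitz K ⧸ Submodule.span (Toeplitz K) {tx K ^ k}) :=
  ∑ j : Fin k,
    ((Submodule.span (Toeplitz K) {tx K ^ k}).mkQ ∘ₗ
      LinearMap.toSpanSingleton _ _ (tx K ^ (j : ℕ)) ∘ₗ
      (Submodule.span (Toeplitz K) {Tg K}).subtype) ∘ₗ LinearMap.proj j

lemma psi_apply (k : ℕ) (s : Fin k → (Submodule.span (Toeplitz K) {Tg K})) :
    psi K k s = (Submodule.span (Toeplitz K) {tx K ^ k}).mkQ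
      (∑ j : Fin k, (s j : Toeplitz K) * tx K ^ (j : ℕ)) := by
  simp [psi, LinearMap.sum_apply, map_sum, smul_eq_mul]

lemma hker (k : ℕ) (hk : 1 ≤ k) :
    Submodule.span (Toeplitz K) {tx K ^ k} ≤ LinearMap.ker (phiAux K k) := by
  rw [Submodule.span_le, Set.singleton_subset_iff]
  refine LinearMap.mem_ker.mpr ?_
  funext j
  refine Subtype.ext ?_
  rw [phiAux_apply]
  show tx K ^ k * (ty K ^ (j : ℕ) * Tg K) = 0
  exact xk_yj_g K k j j.2

lemma hcomp (k : ℕ) (s : Fin k → Submodule.span (Toeplitz K) {Tg K}) (j' : Fin k) :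
    (∑ j : Fin k, (s j : Toeplitz K) * tx K ^ (j : ℕ)) * (ty K ^ (j' : ℕ) * Tg K)
      = (s j' : Toeplitz K) := by
  rw [Finset.sum_mul]
  have hterm : ∀ j : Fin k,
      (s j : Toeplitz K) * tx K ^ (j : ℕ) * (ty K ^ (j' : ℕ) * Tg K)
        = if j = j' then (s j' : Toeplitz K) else 0 := by
    intro j
    obtain ⟨c, hc⟩ := Submodule.mem_span_singleton.mp (s j).2
    rw [smul_eq_mul] at hc
    rw [← hc]
    simp only [mul_assoc]
    rw [key K (j : ℕ) (j' : ℕ)]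
    by_cases h : j = j'
    · subst h
      rw [if_pos rfl, if_pos rfl, hc]
    · rw [if_neg (fun hv => h (Fin.val_injective hv)), if_neg h, mul_zero]
  rw [Finset.sum_congr rfl fun j _ => hterm j]
  simp

lemma psi_inj (k : ℕ) : Function.Injective (psi K k) := by
  intro a b hab
  rw [psi_apply, psi_apply, Submodule.mkQ_apply, Submodule.mkQ_apply,
    Submodule.Quotient.eq] at hab
  obtain ⟨r, hr⟩ := Submodule.mem_span_singleton.mp hab
  funext j'
  refine Subtype.ext ?_
  rw [← hcomp K k a j', ← hcomp K k b j', ← sub_eq_zero, ← sub_mul, ← hr,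
    smul_eq_mul, mul_assoc, xk_yj_g K k j' j'.2, mul_zero]

lemma psi_surj (k : ℕ) : Function.Surjective (psi K k) := by
  intro q
  obtain ⟨r, rfl⟩ := Submodule.Quotient.mk_surjective _ q
  refine ⟨phiAux K k r, ?_⟩
  rw [show psi K k (phiAux K k r)
      = (Submodule.span (Toeplitz K) {tx K ^ k}).mkQ
        (∑ j : Fin k, (r * (ty K ^ (j : ℕ) * Tg K)) * tx K ^ (j : ℕ)) from
    psi_apply K k _]
  rw [Submodule.mkQ_apply, Submodule.Quotient.eq]
  have hsum : ∑ j : Fin k, (r * (ty K ^ (j : ℕ) * Tg K)) * tx K ^ (j : ℕ)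
      = r * (1 - ty K ^ k * tx K ^ k) := by
    rw [← tele K k, Finset.mul_sum, ← Fin.sum_univ_eq_sum_range
      (fun j => r * (ty K ^ j * Tg K * tx K ^ j)) k]
    exact Finset.sum_congr rfl fun j _ => by rw [mul_assoc]
  rw [hsum, mul_sub, mul_one, sub_sub_cancel_left]
  have hmem : (r * ty K ^ k) • tx K ^ k ∈ Submodule.span (Toeplitz K) {tx K ^ k} :=
    Submodule.smul_mem _ _ (Submodule.mem_span_singleton_self _)
  simpa [smul_eq_mul, mul_assoc] using Submodule.neg_mem _ hmem

/-- For each `k ≥ 1`, `R/Rx^k` is isomorphic as a left `R`-module to a direct sum of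
`k` copies of the simple module `S₁ = R(1-yx)`. -/
theorem toeplitz_quotient_xk (k : ℕ) (hk : 1 ≤ k) :
    Nonempty ((Toeplitz K ⧸ Submodule.span (Toeplitz K) {tx K ^ k}) ≃ₗ[Toeplitz K]
      (Fin k → Submodule.span (Toeplitz K) {1 - ty K * tx K})) := by
  exact ⟨(LinearEquiv.ofBijective (psi K k) ⟨psi_inj K k, psi_surj K k⟩).symm⟩
end
end
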